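/- Let G = G(p,q,A), D its set of diagonal elements, and ρ = min{rank(D − I) : D ∈ D, D ≠ I}. If the commutator subgroup contains no non-scalar matrix, then ρ ≥ p/2. -/

import Mathlib

open Matrix

/-!
Conjugating a diagonal matrix `diag(d)` by the cyclic shift `S` permutes its entries cyclically.
If `X = diag(d) ∈ G`, the commutator `⁅S, X⁆` is a scalar `η`, so `d j = η d (j + 1)` for all `j`.
Going once around the cycle gives `η ^ p = 1`. Since `p` is prime, either `η = 1`, in which case
`X` is a scalar `c ≠ 1` and `X - 1` has rank `p`, or `η` is a primitive `p`-th root of unity,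
in which case `d j = η⁻ʲ d 0` has pairwise distinct entries, at most one of them equal to `1`,
and `rank (X - 1) ≥ p - 1 ≥ p / 2`.
-/

namespace Matrix

def cyclicShift (n : ℕ) [NeZero n] (R : Type*) [Zero R] [One R] : Matrix (Fin n) (Fin n) R :=
  of fun i j => if i = j + 1 then 1 else 0

variable {n : ℕ} [NeZero n] {R : Type*}

theorem cyclicShift_mul_diagonal_apply_succ [NonAssocSemiring R] (d : Fin n → R) (j : Fin n) :
    (cyclicShift n R * diagonal d) (j + 1) j = d j := by
  simp [cyclicShift, mul_diagonal]

theorem diagonal_mul_cyclicShift_apply_succ [NonAssocSemiring R] (d : Fin n → R) (j : Fin n) :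
    (diagonal d * cyclicShift n R) (j + 1) j = d (j + 1) := by
  simp [cyclicShift, diagonal_mul]

theorem eq_mul_succ_of_cyclicShift_mul_diagonal [Semiring R] {d : Fin n → R} {η : R}
    (h : cyclicShift n R * diagonal d = η • (diagonal d * cyclicShift n R)) (j : Fin n) :
    d j = η * d (j + 1) := by
  have := congrFun (congrFun h (j + 1)) j
  rwa [smul_apply, cyclicShift_mul_diagonal_apply_succ, diagonal_mul_cyclicShift_apply_succ,
    smul_eq_mul] at this

theorem rank_diagonal_sub_one {m K : Type*} [Fintype m] [DecidableEq m] [Field K]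
    [DecidableEq K] (d : m → K) : (diagonal d - 1).rank = Fintype.card {i // d i ≠ 1} := by
  rw [← diagonal_one, diagonal_sub, rank_diagonal]
  exact Fintype.card_congr (Equiv.subtypeEquivRight fun i => sub_ne_zero)

end Matrix

section CyclicRecurrence

open Fin.NatCast

variable {n : ℕ} [NeZero n]

theorem Fin.eq_pow_mul_add_of_eq_mul_succ {M : Type*} [Monoid M] {η : M} {d : Fin n → M}
    (h : ∀ j, d j = η * d (j + 1)) (i : Fin n) (k : ℕ) : d i = η ^ k * d (i + (k : Fin n)) := by
  induction k with
  | zero => simp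
  | succ k ih => rw [ih, h, Nat.cast_succ, ← add_assoc, ← mul_assoc, ← pow_succ]

theorem Fin.eq_const_or_injective_of_eq_mul_succ {K : Type*} [CommRing K] [IsDomain K]
    (hn : n.Prime) {η : K} {d : Fin n → K} (h : ∀ j, d j = η * d (j + 1)) (h0 : d 0 ≠ 0) :
    (∀ i, d i = d 0) ∨ Function.Injective d := by
  have hpow (j : Fin n) : d 0 = η ^ (j : ℕ) * d j := by
    simpa using Fin.eq_pow_mul_add_of_eq_mul_succ h 0 j
  have hηn : η ^ n = 1 := by
    have := Fin.eq_pow_mul_add_of_eq_mul_succ h 0 n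
    rw [Fin.natCast_self, add_zero] at this
    exact mul_right_cancel₀ h0 (by rw [one_mul, ← this])
  by_cases hη : η = 1
  · left
    intro i
    simpa [hη] using (hpow i).symm
  · right
    have := Fact.mk hn
    have hprim : IsPrimitiveRoot η n := orderOf_eq_prime hηn hη ▸ IsPrimitiveRoot.orderOf η
    intro i j hij
    have hi : d i ≠ 0 := fun hi => h0 (by rw [hpow i, hi, mul_zero])
    refine Fin.ext (hprim.pow_inj i.isLt j.isLt (mul_right_cancel₀ hi ?_))
    rw [← hpow i, hij, ← hpow j]

end CyclicRecurrence

theorem Fintype.card_le_card_subtype_ne_add_one {ι α : Type*} [Fintype ι] [DecidableEq α]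
    {d : ι → α} (hd : Function.Injective d) (c : α) :
    Fintype.card ι ≤ Fintype.card {i // d i ≠ c} + 1 := by
  have hc : Fintype.card {i // d i = c} ≤ 1 :=
    Fintype.card_le_one_iff.2 fun a b => Subtype.ext (hd (a.2.trans b.2.symm))
  have hcompl : Fintype.card {i // d i ≠ c} = Fintype.card ι - Fintype.card {i // d i = c} :=
    Fintype.card_subtype_compl _
  have := Fintype.card_subtype_le fun i => d i = c
  omega

theorem Matrix.le_two_mul_rank_diagonal_sub_one {p : ℕ} [NeZero p] {K : Type*} [Field K]
    (hp : p.Prime) {η : K} {d : Fin p → K} (h : ∀ j, d j = η * d (j + 1)) (h0 : d 0 ≠ 0)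
    (hne : diagonal d ≠ 1) : p ≤ 2 * (diagonal d - 1).rank := by
  classical
  rw [rank_diagonal_sub_one]
  rcases Fin.eq_const_or_injective_of_eq_mul_succ hp h h0 with hconst | hinj
  · have h01 : d 0 ≠ 1 := fun h1 => hne (by rw [← diagonal_one]; congr; ext i; rw [hconst, h1])
    have : Fintype.card {i // d i ≠ 1} = p := by
      rw [Fintype.card_congr (Equiv.subtypeUnivEquiv fun i => hconst i ▸ h01), Fintype.card_fin]
    omega
  · have hcard := Fintype.card_le_card_subtype_ne_add_one hinj 1
    rw [Fintype.card_fin] at hcard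
    have := hp.two_le
    omega

open scoped commutatorElement in
theorem mul_eq_commutatorElement_mul_mul {G : Type*} [Group G] (g x : G) :
    g * x = ⁅g, x⁆ * x * g := by
  rw [commutatorElement_def]; group

theorem stmt17_general (p : ℕ) [NeZero p] (hp : p.Prime)
    (SU AU : Matrix.unitaryGroup (Fin p) ℂ)
    (hS : (SU : Matrix (Fin p) (Fin p) ℂ)
      = Matrix.of fun i j : Fin p => if i = j + 1 then (1 : ℂ) else 0)
    (G : Subgroup (Matrix.unitaryGroup (Fin p) ℂ)) (hG : G = Subgroup.closure {SU, AU})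
    (hsc : ∀ X ∈ ⁅G, G⁆, ∃ η : ℂ,
      (X : Matrix (Fin p) (Fin p) ℂ) = η • (1 : Matrix (Fin p) (Fin p) ℂ)) :
    ∀ X ∈ G, (∃ d : Fin p → ℂ, (X : Matrix (Fin p) (Fin p) ℂ) = Matrix.diagonal d) →
      (X : Matrix (Fin p) (Fin p) ℂ) ≠ 1 →
      p ≤ 2 * ((X : Matrix (Fin p) (Fin p) ℂ) - 1).rank := by
  rintro X hX ⟨d, hd⟩ hne
  have hSU : SU ∈ G := hG ▸ Subgroup.subset_closure (by simp)
  obtain ⟨η, hη⟩ := hsc _ (Subgroup.commutator_mem_commutator hSU hX)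
  have hcomm : cyclicShift p ℂ * diagonal d = η • (diagonal d * cyclicShift p ℂ) := by
    have := congrArg Subtype.val (mul_eq_commutatorElement_mul_mul SU X)
    simpa [hη, hd, hS, cyclicShift] using this
  have hd0 : d 0 ≠ 0 := by
    have hdet := (UnitaryGroup.det_isUnit X).ne_zero
    rw [hd, det_diagonal] at hdet
    exact Finset.prod_ne_zero_iff.mp hdet 0 (Finset.mem_univ 0)
  rw [hd] at hne ⊢
  exact le_two_mul_rank_diagonal_sub_one hp (eq_mul_succ_of_cyclicShift_mul_diagonal hcomm) hd0 hne

/-- If the commutator subgroup of `G = G(p,q,A)` contains no non-scalar matrix, then every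
diagonal `D ∈ G` with `D ≠ I` satisfies `rank (D - I) ≥ p / 2`, i.e. `ρ ≥ p / 2`. -/
theorem stmt17 (p q : ℕ) [NeZero p] (hp : p.Prime) (hq : q.Prime)
    (SU AU : Matrix.unitaryGroup (Fin p) ℂ)
    (hS : (SU : Matrix (Fin p) (Fin p) ℂ)
      = Matrix.of fun i j : Fin p => if i = j + 1 then (1 : ℂ) else 0)
    (ω : Fin p → ℂ) (hA : (AU : Matrix (Fin p) (Fin p) ℂ) = Matrix.diagonal ω)
    (hω : ∀ i, ω i ^ q = 1) (hns : ∃ i j, ω i ≠ ω j)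
    (G : Subgroup (Matrix.unitaryGroup (Fin p) ℂ)) (hG : G = Subgroup.closure {SU, AU})
    (hsc : ∀ X ∈ ⁅G, G⁆, ∃ η : ℂ,
      (X : Matrix (Fin p) (Fin p) ℂ) = η • (1 : Matrix (Fin p) (Fin p) ℂ)) :
    ∀ X ∈ G, (∃ d : Fin p → ℂ, (X : Matrix (Fin p) (Fin p) ℂ) = Matrix.diagonal d) →
      (X : Matrix (Fin p) (Fin p) ℂ) ≠ 1 →
      p ≤ 2 * ((X : Matrix (Fin p) (Fin p) ℂ) - 1).rank :=
  stmt17_general p hp SU AU hS G hG hsc
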